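/- Gauge invariance of the characteristic polynomial of the fully tilted operator (Theorem 'gaugtran'): Let W : Matrix (Fin n) (Fin n) ℝ be a MJPG and q : Fin n → Fin n → ℝ antisymmetric (q i j = −q j i). For d : Fin n → ℝ define q' i j := q i j + d i − d j (a cocycle, i.e. pure-gauge, shift of the counting fields). Then T W q' = D * (T W q) * D⁻¹ where D := Matrix.diagonal (fun i => Real.exp (−d i)); in particular the characteristic polynomials of T W q' and T W q coincide, so all eigenvalues of the fully tilted operator — in particular the scaled cumulant generating function — are invariant under such gauge transformations. -/
import Mathlib


open Matrix

lemma charpoly_conj_aux {n : ℕ} (P A : Matrix (Fin n) (Fin n) ℝ) (hP : IsUnit P.det) :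
    (P * A * P⁻¹).charpoly = A.charpoly := by
  have hPP : P * P⁻¹ = 1 := mul_nonsing_inv P hP
  have hPP' : P⁻¹ * P = 1 := nonsing_inv_mul P hP
  have hC : charmatrix (P * A * P⁻¹)
      = (P.map Polynomial.C) * charmatrix A * (P⁻¹.map Polynomial.C) := by
    unfold charmatrix
    have hmap : ∀ (X Y : Matrix (Fin n) (Fin n) ℝ),
        (X * Y).map (Polynomial.C : ℝ →+* Polynomial ℝ) = X.map Polynomial.C * Y.map Polynomial.C :=
      fun X Y => Matrix.map_mul
    have h1 : P.map (Polynomial.C : ℝ →+* Polynomial ℝ) * P⁻¹.map Polynomial.C = 1 := by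
      rw [← hmap, hPP]; simp
    rw [Matrix.mul_sub, Matrix.sub_mul]
    congr 1
    · rw [← (Matrix.scalar_commute (Polynomial.X : Polynomial ℝ)
        (fun r' => mul_comm _ _) (P.map Polynomial.C)).eq, mul_assoc]
      rw [h1, mul_one]
    · simp only [RingHom.mapMatrix_apply]
      rw [← hmap, ← hmap]
  unfold Matrix.charpoly
  rw [hC, Matrix.det_mul, Matrix.det_mul]
  have : (P.map (Polynomial.C : ℝ →+* Polynomial ℝ)).det * (P⁻¹.map Polynomial.C).det = 1 := by
    rw [← Matrix.det_mul, ← Matrix.map_mul, hPP]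
    simp
  rw [mul_right_comm, this, one_mul]

/-- Gauge invariance of the characteristic polynomial of the fully tilted operator
(Theorem "gaugtran"). -/
theorem gauge_invariance_charpoly {n : ℕ}
    (W : Matrix (Fin n) (Fin n) ℝ)
    (hW1 : ∀ i j, i ≠ j → 0 ≤ W i j)
    (hW2 : ∀ j, ∑ i, W i j = 0)
    (T : Matrix (Fin n) (Fin n) ℝ → (Fin n → Fin n → ℝ) → Matrix (Fin n) (Fin n) ℝ)
    (hT : ∀ V r i j, T V r i j = if i = j then V i j else V i j * Real.exp (-r i j))
    (q : Fin n → Fin n → ℝ) (hq : ∀ i j, q i j = -q j i)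
    (d : Fin n → ℝ) :
    T W (fun i j => q i j + d i - d j)
      = Matrix.diagonal (fun i => Real.exp (-d i)) * T W q
          * (Matrix.diagonal (fun i => Real.exp (-d i)))⁻¹ ∧
    (T W (fun i j => q i j + d i - d j)).charpoly = (T W q).charpoly := by
  set D := Matrix.diagonal (fun i => Real.exp (-d i)) with hD
  have hdet : IsUnit D.det := by
    rw [hD, Matrix.det_diagonal]
    exact (Finset.prod_pos (fun i _ => Real.exp_pos _)).ne'.isUnit
  have hDinv : D⁻¹ = Matrix.diagonal (fun i => Real.exp (d i)) := by
    rw [Matrix.inv_eq_right_inv]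
    rw [hD, Matrix.diagonal_mul_diagonal]
    ext i j
    by_cases h : i = j <;> simp [h, ← Real.exp_add, Matrix.one_apply]
  have hmain : T W (fun i j => q i j + d i - d j) = D * T W q * D⁻¹ := by
    rw [hDinv]
    ext i j
    simp only [hD, Matrix.diagonal_mul, Matrix.mul_diagonal, hT]
    by_cases h : i = j
    · subst h; rw [mul_right_comm, ← Real.exp_add]; simp
    · simp only [h, if_false]
      rw [show -(q i j + d i - d j) = -d i + -q i j + d j by ring,
        Real.exp_add, Real.exp_add]
      ring
  exact ⟨hmain, by rw [hmain]; exact charpoly_conj_aux D (T W q) hdet⟩
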